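/- arXiv:2309.07069 — 4 statements merged into one kernel-verified Lean document; each statement's English description precedes it below -/
import Mathlib

section
/- Let G be a locally compact topological group with identity e and μ a left Haar measure on G. Let ξ : G × G → ℝ be a continuous exponent of G (ξ(e,e) = 0 and ξ(a,b) + ξ(ab,c) = ξ(b,c) + ξ(a,bc) for all a,b,c) and let g : G → ℝ be a continuous function with compact support satisfying ∫_G g(k) dμ(k) = 1. Define x(a) = −∫_G ξ(a,k) g(k) dμ(k). Then for all a, b ∈ G, ξ(a,b) + x(a) + x(b) − x(ab) = ∫_G ξ(a,k) ( g(b⁻¹k) − g(k) ) dμ(k). -/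
open MeasureTheory

/-- Bargmann's smoothing identity with a left Haar measure:
with `x(a) = −∫ ξ(a,k) g(k) dμ(k)` one has
`ξ(a,b) + Δ_{a,b}[x] = ∫ ξ(a,k)(g(b⁻¹k) − g(k)) dμ(k)`. -/
theorem exponent_left_haar_smoothing
    {G : Type*} [Group G] [TopologicalSpace G] [IsTopologicalGroup G]
    [LocallyCompactSpace G] [MeasurableSpace G] [BorelSpace G]
    (μ : Measure G) [μ.IsHaarMeasure]
    (ξ : G × G → ℝ) (hξcont : Continuous ξ) (hξe : ξ (1, 1) = 0)
    (hξcoc : ∀ a b c : G, ξ (a, b) + ξ (a * b, c) = ξ (b, c) + ξ (a, b * c))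
    (g : G → ℝ) (hgcont : Continuous g) (hgsupp : HasCompactSupport g)
    (hgint : ∫ k, g k ∂μ = 1)
    (x : G → ℝ) (hx : ∀ a : G, x a = -∫ k, ξ (a, k) * g k ∂μ) :
    ∀ a b : G, ξ (a, b) + x a + x b - x (a * b) =
      ∫ k, ξ (a, k) * (g (b⁻¹ * k) - g k) ∂μ := by
  intro a b
  -- integrability of basic pieces
  have hcont : ∀ c : G, Continuous (fun k => ξ (c, k)) := fun c =>
    hξcont.comp (Continuous.prodMk_right c)
  have hint : ∀ c : G, Integrable (fun k => ξ (c, k) * g k) μ := by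
    intro c
    exact ((hcont c).mul hgcont).integrable_of_hasCompactSupport
      (hgsupp.mul_left)
  have hgsupp' : HasCompactSupport (fun k => g (b⁻¹ * k)) :=
    hgsupp.comp_homeomorph (Homeomorph.mulLeft b⁻¹)
  have hgcont' : Continuous (fun k => g (b⁻¹ * k)) :=
    hgcont.comp (continuous_mul_left b⁻¹)
  have hint' : Integrable (fun k => ξ (a, k) * g (b⁻¹ * k)) μ :=
    ((hcont a).mul hgcont').integrable_of_hasCompactSupport hgsupp'.mul_left
  -- translation
  have htrans : (∫ k, ξ (a, k) * g (b⁻¹ * k) ∂μ)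
      = ∫ k, ξ (a, b * k) * g k ∂μ := by
    rw [← integral_mul_left_eq_self (fun k => ξ (a, k) * g (b⁻¹ * k)) b]
    simp
  have hgb : Integrable (fun k => g k) μ :=
    hgcont.integrable_of_hasCompactSupport hgsupp
  -- rewrite integrand
  have key : ∀ k : G, ξ (a, b * k) * g k
      = ξ (a, b) * g k + ξ (a * b, k) * g k - ξ (b, k) * g k := by
    intro k
    linear_combination (-(hξcoc a b k)) * g k
  rw [show (fun k => ξ (a, k) * (g (b⁻¹ * k) - g k))
      = fun k => ξ (a, k) * g (b⁻¹ * k) - ξ (a, k) * g k by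
        funext k; ring]
  rw [integral_sub hint' (hint a), htrans]
  have : (∫ k, ξ (a, b * k) * g k ∂μ)
      = ξ (a, b) * ∫ k, g k ∂μ + (∫ k, ξ (a * b, k) * g k ∂μ)
        - ∫ k, ξ (b, k) * g k ∂μ := by
    calc (∫ k, ξ (a, b * k) * g k ∂μ)
        = ∫ k, (ξ (a, b) * g k + ξ (a * b, k) * g k - ξ (b, k) * g k) ∂μ :=
          integral_congr_ae (Filter.Eventually.of_forall key)
      _ = ξ (a, b) * ∫ k, g k ∂μ + (∫ k, ξ (a * b, k) * g k ∂μ)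
            - ∫ k, ξ (b, k) * g k ∂μ := by
          have h1 : Integrable (fun k => ξ (a, b) * g k + ξ (a * b, k) * g k) μ :=
            (hgb.const_mul _).add (hint (a*b))
          have h2 : Integrable (fun k => ξ (a, b) * g k) μ := hgb.const_mul _
          rw [integral_sub h1 (hint b), integral_add h2 (hint (a*b)), integral_const_mul]
  rw [this, hgint, hx a, hx b, hx (a * b)]
  ring
end

section
/- Let G be a locally compact topological group with identity e and ν a right Haar measure on G. Let ξ' : G × G → ℝ be a continuous exponent of G (ξ'(e,e) = 0 and the cocycle identity holds) and let g' : G → ℝ be a continuous function with compact support satisfying ∫_G g'(l) dν(l) = 1. Define x'(a) = −∫_G ξ'(l,a) g'(l) dν(l). Then for all a, b ∈ G, ξ'(a,b) + x'(a) + x'(b) − x'(ab) = ∫_G ξ'(l,b) ( g'(l a⁻¹) − g'(l) ) dν(l). -/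
open MeasureTheory

/-- Bargmann's smoothing identity with a right Haar measure:
with `x'(a) = −∫ ξ'(l,a) g'(l) dν(l)` one has
`ξ'(a,b) + Δ_{a,b}[x'] = ∫ ξ'(l,b)(g'(la⁻¹) − g'(l)) dν(l)`. -/
theorem exponent_right_haar_smoothing
    {G : Type*} [Group G] [TopologicalSpace G] [IsTopologicalGroup G]
    [LocallyCompactSpace G] [MeasurableSpace G] [BorelSpace G]
    (ν : Measure G) [ν.IsMulRightInvariant] [IsFiniteMeasureOnCompacts ν]
    [ν.IsOpenPosMeasure]
    (ξ' : G × G → ℝ) (hξ'cont : Continuous ξ') (hξ'e : ξ' (1, 1) = 0)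
    (hξ'coc : ∀ a b c : G, ξ' (a, b) + ξ' (a * b, c) = ξ' (b, c) + ξ' (a, b * c))
    (g' : G → ℝ) (hg'cont : Continuous g') (hg'supp : HasCompactSupport g')
    (hg'int : ∫ l, g' l ∂ν = 1)
    (x' : G → ℝ) (hx' : ∀ a : G, x' a = -∫ l, ξ' (l, a) * g' l ∂ν) :
    ∀ a b : G, ξ' (a, b) + x' a + x' b - x' (a * b) =
      ∫ l, ξ' (l, b) * (g' (l * a⁻¹) - g' l) ∂ν := by
  intro a b
  have hga : HasCompactSupport fun l : G => g' (l * a⁻¹) :=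
    hg'supp.comp_homeomorph (Homeomorph.mulRight a⁻¹)
  have int1 : ∀ c : G, Integrable (fun l => ξ' (l, c) * g' l) ν := fun c => by
    apply Continuous.integrable_of_hasCompactSupport
    · exact (hξ'cont.comp (continuous_id.prodMk continuous_const)).mul hg'cont
    · exact hg'supp.mul_left
  have int2 : Integrable (fun l => ξ' (l * a, b) * g' l) ν := by
    apply Continuous.integrable_of_hasCompactSupport
    · exact (hξ'cont.comp ((continuous_id.mul continuous_const).prodMk
        continuous_const)).mul hg'cont
    · exact hg'supp.mul_left
  have int3 : Integrable (fun l => ξ' (l, b) * g' (l * a⁻¹)) ν := by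
    apply Continuous.integrable_of_hasCompactSupport
    · exact (hξ'cont.comp (continuous_id.prodMk continuous_const)).mul
        (hg'cont.comp (continuous_id.mul continuous_const))
    · exact hga.mul_left
  have hcoc : ∀ l : G, ξ' (l, a * b) = ξ' (l, a) + ξ' (l * a, b) - ξ' (a, b) :=
    fun l => by linarith [hξ'coc l a b]
  have h1 : ∫ l, ξ' (l, a * b) * g' l ∂ν
      = (∫ l, ξ' (l, a) * g' l ∂ν) + (∫ l, ξ' (l * a, b) * g' l ∂ν) - ξ' (a, b) := by
    have heq : (fun l => ξ' (l, a * b) * g' l)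
        = fun l => (ξ' (l, a) * g' l + ξ' (l * a, b) * g' l) - ξ' (a, b) * g' l := by
      funext l; rw [hcoc l]; ring
    have intg : Integrable g' ν := hg'cont.integrable_of_hasCompactSupport hg'supp
    have e1 : ∫ l, (ξ' (l, a) * g' l + ξ' (l * a, b) * g' l - ξ' (a, b) * g' l) ∂ν
        = (∫ l, (ξ' (l, a) * g' l + ξ' (l * a, b) * g' l) ∂ν)
          - ∫ l, ξ' (a, b) * g' l ∂ν :=
      integral_sub ((int1 a).add int2) (intg.const_mul _)
    have e2 : ∫ l, (ξ' (l, a) * g' l + ξ' (l * a, b) * g' l) ∂ν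
        = (∫ l, ξ' (l, a) * g' l ∂ν) + ∫ l, ξ' (l * a, b) * g' l ∂ν :=
      integral_add (int1 a) int2
    rw [heq, e1, e2, integral_const_mul, hg'int, mul_one]
  have hinv : ∫ l, ξ' (l * a, b) * g' l ∂ν = ∫ l, ξ' (l, b) * g' (l * a⁻¹) ∂ν := by
    have := integral_mul_right_eq_self (μ := ν) (fun l => ξ' (l, b) * g' (l * a⁻¹)) a
    simp only [mul_inv_cancel_right] at this
    exact this
  have h2 : ∫ l, ξ' (l, b) * (g' (l * a⁻¹) - g' l) ∂ν
      = (∫ l, ξ' (l, b) * g' (l * a⁻¹) ∂ν) - ∫ l, ξ' (l, b) * g' l ∂ν := by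
    simp only [mul_sub]
    exact integral_sub int3 (int1 b)
  rw [hx' a, hx' b, hx' (a * b), h2, ← hinv, h1]
  ring
end

section
/- Let G be a locally compact topological group with identity e, μ a left Haar measure and ν a right Haar measure on G. Let ξ : G × G → ℝ be a continuous exponent of G, and let g, g' : G → ℝ be continuous compactly supported functions with ∫_G g dμ = 1 and ∫_G g' dν = 1. Define x(a) = −∫_G ξ(a,k) g(k) dμ(k), ξ'(a,b) = ξ(a,b) + x(a) + x(b) − x(ab), x'(a) = −∫_G ξ'(l,a) g'(l) dν(l), and ξ''(a,b) = ξ'(a,b) + x'(a) + x'(b) − x'(ab). Then for all a, b ∈ G, ξ''(a,b) = ∫_G ∫_G ξ(l,k) ( g(b⁻¹k) − g(k) ) ( g'(l a⁻¹) − g'(l) ) dμ(k) dν(l). -/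
open MeasureTheory

/-- Auxiliary: continuity of a parametric integral `a ↦ ∫ k, F (a,k) * g k ∂μ`
when `F` is continuous and `g` is continuous with compact support. -/
lemma cont_param_integral
    {G : Type*} [TopologicalSpace G] [MeasurableSpace G] [OpensMeasurableSpace G]
    (μ : Measure G) [IsFiniteMeasureOnCompacts μ]
    (F : G × G → ℝ) (hF : Continuous F)
    (g : G → ℝ) (hg : Continuous g) (hgs : HasCompactSupport g) :
    Continuous (fun a => ∫ k, F (a, k) * g k ∂μ) := by
  have h := continuousOn_integral_bilinear_of_locally_integrable_of_compact_support
    (μ := μ) (ContinuousLinearMap.mul ℝ ℝ)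
    (f := fun a k => F (a, k) * g k) (s := Set.univ) (k := tsupport g)
    (g := fun _ => (1 : ℝ)) hgs
    (by
      apply Continuous.continuousOn
      exact (hF.mul (hg.comp continuous_snd)))
    (by
      intro p y _ hy
      simp [image_eq_zero_of_notMem_tsupport hy])
    (by
      exact integrableOn_const hgs.isCompact.measure_lt_top.ne)
  rw [← continuousOn_univ]
  convert h using 2 with a
  simp

/-- combining the left- and right-Haar smoothings, the twice-modified
exponent `ξ''` is given by the double integral
`ξ''(a,b) = ∫∫ ξ(l,k)(g(b⁻¹k) − g(k))(g'(la⁻¹) − g'(l)) dμ(k) dν(l)`. -/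
theorem exponent_double_haar_smoothing
    {G : Type*} [Group G] [TopologicalSpace G] [IsTopologicalGroup G]
    [LocallyCompactSpace G] [MeasurableSpace G] [BorelSpace G]
    (μ : Measure G) [μ.IsHaarMeasure]
    (ν : Measure G) [ν.IsMulRightInvariant] [IsFiniteMeasureOnCompacts ν]
    [ν.IsOpenPosMeasure]
    (ξ : G × G → ℝ) (hξcont : Continuous ξ) (hξe : ξ (1, 1) = 0)
    (hξcoc : ∀ a b c : G, ξ (a, b) + ξ (a * b, c) = ξ (b, c) + ξ (a, b * c))
    (g : G → ℝ) (hgcont : Continuous g) (hgsupp : HasCompactSupport g)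
    (hgint : ∫ k, g k ∂μ = 1)
    (g' : G → ℝ) (hg'cont : Continuous g') (hg'supp : HasCompactSupport g')
    (hg'int : ∫ l, g' l ∂ν = 1)
    (x : G → ℝ) (hx : ∀ a : G, x a = -∫ k, ξ (a, k) * g k ∂μ)
    (ξ' : G × G → ℝ)
    (hξ' : ∀ a b : G, ξ' (a, b) = ξ (a, b) + x a + x b - x (a * b))
    (x' : G → ℝ) (hx' : ∀ a : G, x' a = -∫ l, ξ' (l, a) * g' l ∂ν)
    (ξ'' : G × G → ℝ)
    (hξ'' : ∀ a b : G, ξ'' (a, b) = ξ' (a, b) + x' a + x' b - x' (a * b)) :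
    ∀ a b : G, ξ'' (a, b) =
      ∫ l, (∫ k, ξ (l, k) * (g (b⁻¹ * k) - g k) ∂μ) * (g' (l * a⁻¹) - g' l) ∂ν := by
  -- basic integrability facts over μ
  have hgi : Integrable g μ := hgcont.integrable_of_hasCompactSupport hgsupp
  have intg : ∀ c : G, Integrable (fun k => ξ (c, k) * g k) μ := fun c =>
    ((hξcont.comp (Continuous.prodMk_right c)).mul hgcont).integrable_of_hasCompactSupport
      hgsupp.mul_left
  have intg_shift : ∀ c b : G, Integrable (fun k => ξ (c, k) * g (b⁻¹ * k)) μ := by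
    intro c b
    have hsupp : HasCompactSupport (fun k => g (b⁻¹ * k)) :=
      hgsupp.comp_homeomorph (Homeomorph.mulLeft b⁻¹)
    exact ((hξcont.comp (Continuous.prodMk_right c)).mul
      (hgcont.comp (continuous_const.mul continuous_id))).integrable_of_hasCompactSupport
      hsupp.mul_left
  -- continuity of x
  have hxcont : Continuous x := by
    have h1 : Continuous (fun a => ∫ k, ξ (a, k) * g k ∂μ) :=
      cont_param_integral μ ξ hξcont g hgcont hgsupp
    have hxe : x = fun a => -∫ k, ξ (a, k) * g k ∂μ := funext hx
    rw [hxe]; exact h1.neg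
  -- Step 1 : ξ' as an integral
  have hform1 : ∀ a b : G, ξ' (a, b) = ∫ k, ξ (a, k) * (g (b⁻¹ * k) - g k) ∂μ := by
    intro a b
    have split : ∫ k, ξ (a, k) * (g (b⁻¹ * k) - g k) ∂μ
        = (∫ k, ξ (a, k) * g (b⁻¹ * k) ∂μ) - ∫ k, ξ (a, k) * g k ∂μ := by
      rw [← integral_sub (intg_shift a b) (intg a)]
      congr 1 with k; ring
    have inv1 : ∫ k, ξ (a, k) * g (b⁻¹ * k) ∂μ = ∫ k, ξ (a, b * k) * g k ∂μ := by
      rw [← integral_mul_left_eq_self (fun k => ξ (a, k) * g (b⁻¹ * k)) b]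
      congr 1 with k
      simp [inv_mul_cancel_left]
    have coc : ∀ k : G, ξ (a, b * k) = ξ (a, b) + ξ (a * b, k) - ξ (b, k) := by
      intro k; have := hξcoc a b k; linarith
    have expand : ∫ k, ξ (a, b * k) * g k ∂μ
        = ξ (a, b) + (∫ k, ξ (a * b, k) * g k ∂μ) - ∫ k, ξ (b, k) * g k ∂μ := by
      have e1 : (fun k => ξ (a, b * k) * g k)
          = fun k => (ξ (a, b) * g k + ξ (a * b, k) * g k) - ξ (b, k) * g k := by
        funext k; rw [coc k]; ring
      have iA : Integrable (fun k => ξ (a, b) * g k + ξ (a * b, k) * g k) μ :=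
        (hgi.const_mul (ξ (a, b))).add (intg (a * b))
      have iB : Integrable (fun k => ξ (a, b) * g k) μ := hgi.const_mul (ξ (a, b))
      rw [e1, integral_sub iA (intg b), integral_add iB (intg (a * b)),
        integral_const_mul, hgint, mul_one]
    have hxa := hx a; have hxb := hx b; have hxab := hx (a * b)
    rw [split, inv1, expand, hξ' a b]
    linarith [hxa, hxb, hxab]
  -- ξ' is a cocycle
  have hcoc' : ∀ a b c : G, ξ' (a, b) + ξ' (a * b, c) = ξ' (b, c) + ξ' (a, b * c) := by
    intro a b c
    have h := hξcoc a b c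
    simp only [hξ']
    rw [mul_assoc]
    linarith
  -- integrability over ν
  have hξ'cont : ∀ c : G, Continuous (fun l => ξ' (l, c)) := by
    intro c
    have he : (fun l => ξ' (l, c)) = fun l => ξ (l, c) + x l + x c - x (l * c) := by
      funext l; exact hξ' l c
    rw [he]
    exact (((hξcont.comp (continuous_id.prodMk continuous_const)).add hxcont).add
      continuous_const).sub (hxcont.comp (continuous_mul_right c))
  have hg'i : Integrable g' ν := hg'cont.integrable_of_hasCompactSupport hg'supp
  have intg' : ∀ c : G, Integrable (fun l => ξ' (l, c) * g' l) ν := fun c =>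
    ((hξ'cont c).mul hg'cont).integrable_of_hasCompactSupport hg'supp.mul_left
  have intg'_shift : ∀ c a : G, Integrable (fun l => ξ' (l, c) * g' (l * a⁻¹)) ν := by
    intro c a
    have hsupp : HasCompactSupport (fun l => g' (l * a⁻¹)) :=
      hg'supp.comp_homeomorph (Homeomorph.mulRight a⁻¹)
    exact ((hξ'cont c).mul
      (hg'cont.comp (continuous_mul_right a⁻¹))).integrable_of_hasCompactSupport
      hsupp.mul_left
  -- Step 2 : ξ'' as an integral of ξ'
  intro a b
  have split2 : ∫ l, ξ' (l, b) * (g' (l * a⁻¹) - g' l) ∂ν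
      = (∫ l, ξ' (l, b) * g' (l * a⁻¹) ∂ν) - ∫ l, ξ' (l, b) * g' l ∂ν := by
    rw [← integral_sub (intg'_shift b a) (intg' b)]
    congr 1 with l; ring
  have inv2 : ∫ l, ξ' (l, b) * g' (l * a⁻¹) ∂ν = ∫ l, ξ' (l * a, b) * g' l ∂ν := by
    rw [← integral_mul_right_eq_self (fun l => ξ' (l, b) * g' (l * a⁻¹)) a]
    congr 1 with l
    simp [mul_inv_cancel_right]
  have coc2 : ∀ l : G, ξ' (l * a, b) = ξ' (a, b) + ξ' (l, a * b) - ξ' (l, a) := by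
    intro l; have := hcoc' l a b; linarith
  have expand2 : ∫ l, ξ' (l * a, b) * g' l ∂ν
      = ξ' (a, b) + (∫ l, ξ' (l, a * b) * g' l ∂ν) - ∫ l, ξ' (l, a) * g' l ∂ν := by
    have e1 : (fun l => ξ' (l * a, b) * g' l)
        = fun l => (ξ' (a, b) * g' l + ξ' (l, a * b) * g' l) - ξ' (l, a) * g' l := by
      funext l; rw [coc2 l]; ring
    have iA : Integrable (fun l => ξ' (a, b) * g' l + ξ' (l, a * b) * g' l) ν :=
      (hg'i.const_mul (ξ' (a, b))).add (intg' (a * b))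
    have iB : Integrable (fun l => ξ' (a, b) * g' l) ν := hg'i.const_mul (ξ' (a, b))
    rw [e1, integral_sub iA (intg' a), integral_add iB (intg' (a * b)),
      integral_const_mul, hg'int, mul_one]
  have key : ξ'' (a, b) = ∫ l, ξ' (l, b) * (g' (l * a⁻¹) - g' l) ∂ν := by
    have hxa := hx' a; have hxb := hx' b; have hxab := hx' (a * b)
    rw [split2, inv2, expand2, hξ'' a b]
    linarith [hxa, hxb, hxab]
  rw [key]
  congr 1 with l
  rw [hform1 l b]
end

section
/- Let G be a finite-dimensional real Lie group and let ξ, ξ' : G × G → ℝ be two smooth exponents of G (smooth functions on G × G with ξ(e,e) = ξ'(e,e) = 0 satisfying the cocycle identity). Suppose ξ and ξ' are equivalent via a continuous function: ξ'(a,b) = ξ(a,b) + x(a) + x(b) − x(ab) for all a, b ∈ G, where x : G → ℝ is continuous with x(e) = 0. Then x is smooth. -/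
open MeasureTheory Set Metric Manifold
open scoped Convolution Topology



theorem my_param_integral_smooth {P : Type*} [NormedAddCommGroup P] [NormedSpace ℝ P]
    {E : Type*} [NormedAddCommGroup E] [NormedSpace ℝ E]
    [MeasurableSpace E] [BorelSpace E] (μ : Measure E)
    {f : E → ℝ} {g : P → E → ℝ} {s : Set P} {k : Set E}
    (hs : IsOpen s) (hk : IsCompact k)
    (hgs : ∀ p t, p ∈ s → t ∉ k → g p t = 0)
    (hf : LocallyIntegrable f μ)
    (hg : ContDiffOn ℝ ((⊤ : ℕ∞) : WithTop ℕ∞) (Function.uncurry g) (s ×ˢ univ)) :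
    ContDiffOn ℝ ((⊤ : ℕ∞) : WithTop ℕ∞) (fun p => ∫ t, f t * g p t ∂μ) s := by
  have hg' : ContDiffOn ℝ ((⊤ : ℕ∞) : WithTop ℕ∞)
      (Function.uncurry fun p u => g p (-u)) (s ×ˢ univ) := by
    have h1 : (Function.uncurry fun p u => g p (-u))
        = (Function.uncurry g) ∘ (fun q : P × E => (q.1, -q.2)) := rfl
    rw [h1]
    exact hg.comp ((contDiff_fst.prodMk contDiff_snd.neg).contDiffOn)
      ((fun q hq => ⟨hq.1, mem_univ _⟩ : MapsTo _ (s ×ˢ univ) (s ×ˢ univ)))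
  have key := contDiffOn_convolution_right_with_param_comp
    (𝕜 := ℝ) (μ := μ) (ContinuousLinearMap.mul ℝ ℝ) (n := (⊤ : ℕ∞))
    (contDiffOn_const (c := (0 : E)))
    (k := -k) hs hk.neg
    (fun p t hp ht => hgs p (-t) hp (by simpa using ht)) hf hg'
  have heq : (fun p => ∫ t, f t * g p t ∂μ)
      = fun p => (f ⋆[ContinuousLinearMap.mul ℝ ℝ, μ] (fun u => g p (-u))) 0 := by
    ext p
    simp [MeasureTheory.convolution, zero_sub]
  rw [heq]
  exact key

theorem my_contDiff_det {E : Type*} [NormedAddCommGroup E] [NormedSpace ℝ E]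
    [FiniteDimensional ℝ E] :
    ContDiff ℝ ((⊤ : ℕ∞) : WithTop ℕ∞) (fun L : E →L[ℝ] E => L.det) := by
  classical
  let b := Module.finBasis ℝ E
  have hdet : (fun L : E →L[ℝ] E => L.det)
      = fun L => ∑ σ : Equiv.Perm (Fin (Module.finrank ℝ E)),
          ((Equiv.Perm.sign σ : ℤ) : ℝ) * ∏ i, b.repr (L (b i)) (σ i) := by
    ext L
    rw [ContinuousLinearMap.det, ← LinearMap.det_toMatrix b, Matrix.det_apply]
    congr 1
    ext σ
    simp [LinearMap.toMatrix_apply, Units.smul_def, zsmul_eq_mul]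
  rw [hdet]
  apply ContDiff.sum
  intro σ _
  apply ContDiff.mul contDiff_const
  apply contDiff_prod
  intro i _
  exact (((b.coord (σ i)).toContinuousLinearMap.comp
    (ContinuousLinearMap.apply ℝ E (b i))).contDiff :)

theorem my_smooth_at_one
    {E : Type*} [NormedAddCommGroup E] [NormedSpace ℝ E] [FiniteDimensional ℝ E]
    {G : Type*} [TopologicalSpace G] [ChartedSpace E G] [Group G]
    [LieGroup (modelWithCornersSelf ℝ E) (⊤ : ℕ∞) G]
    (φ : G × G → ℝ)
    (hφ : ContMDiff ((modelWithCornersSelf ℝ E).prod (modelWithCornersSelf ℝ E))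
      (modelWithCornersSelf ℝ ℝ) (⊤ : ℕ∞) φ)
    (x : G → ℝ) (hxcont : Continuous x)
    (hfe : ∀ a b : G, x (a * b) = x a + x b + φ (a, b)) :
    ContMDiffAt (modelWithCornersSelf ℝ E) (modelWithCornersSelf ℝ ℝ) (⊤ : ℕ∞) x 1 := by
  classical
  borelize E
  set ec : PartialEquiv G E := extChartAt 𝓘(ℝ, E) (1 : G) with hec
  set e0 : E := ec 1 with he0
  have he0mem : e0 ∈ ec.target := (extChartAt 𝓘(ℝ, E) (1 : G)).map_source (mem_extChartAt_source (I := 𝓘(ℝ, E)) (1 : G))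
  have hecopen : IsOpen ec.target := isOpen_extChartAt_target (I := 𝓘(ℝ, E)) (1 : G)
  have hsymm_one : ec.symm e0 = 1 := (extChartAt 𝓘(ℝ, E) (1 : G)).left_inv (mem_extChartAt_source (I := 𝓘(ℝ, E)) (1 : G))
  -- the multiplication read in charts
  set A : E × E → G := fun q => (ec.symm q.1)⁻¹ * ec.symm q.2 with hA
  set M : E × E → E := fun q => ec (A q) with hM
  set D : Set (E × E) := (ec.target ×ˢ ec.target) ∩ A ⁻¹' ec.source with hD
  have hsymmc : ContMDiffOn (modelWithCornersSelf ℝ E) 𝓘(ℝ, E) (⊤ : ℕ∞) ec.symm ec.target :=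
    contMDiffOn_extChartAt_symm (1 : G)
  have hfst : ContMDiffOn ((modelWithCornersSelf ℝ E).prod (modelWithCornersSelf ℝ E)) 𝓘(ℝ, E) (⊤ : ℕ∞)
      (fun q : E × E => ec.symm q.1) (ec.target ×ˢ ec.target) :=
    hsymmc.comp contMDiff_fst.contMDiffOn (fun q hq => hq.1)
  have hsnd : ContMDiffOn ((modelWithCornersSelf ℝ E).prod (modelWithCornersSelf ℝ E)) 𝓘(ℝ, E) (⊤ : ℕ∞)
      (fun q : E × E => ec.symm q.2) (ec.target ×ˢ ec.target) :=
    hsymmc.comp contMDiff_snd.contMDiffOn (fun q hq => hq.2)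
  have hAsm : ContMDiffOn ((modelWithCornersSelf ℝ E).prod (modelWithCornersSelf ℝ E)) 𝓘(ℝ, E) (⊤ : ℕ∞)
      A (ec.target ×ˢ ec.target) := hfst.inv.mul hsnd
  have hDopen : IsOpen D :=
    hAsm.continuousOn.isOpen_inter_preimage (hecopen.prod hecopen)
      (isOpen_extChartAt_source (I := 𝓘(ℝ, E)) (1 : G))
  have hDmem : (e0, e0) ∈ D := by
    constructor
    · exact ⟨he0mem, he0mem⟩
    · show A (e0, e0) ∈ ec.source
      simp only [hA, hsymm_one, inv_one, one_mul]
      exact mem_extChartAt_source (I := 𝓘(ℝ, E)) (1 : G)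
  have hMsm : ContMDiffOn ((modelWithCornersSelf ℝ E).prod (modelWithCornersSelf ℝ E))
      (modelWithCornersSelf ℝ E) (⊤ : ℕ∞) M D := by
    apply (contMDiffOn_extChartAt (I := 𝓘(ℝ, E)) (x := (1 : G))).comp
      (hAsm.mono inter_subset_left)
    intro q hq
    simpa [hec, extChartAt_source] using hq.2
  have hMc : ContDiffOn ℝ ((⊤ : ℕ∞) : WithTop ℕ∞) M D := by
    have := hMsm
    rw [← modelWithCornersSelf_prod] at this
    rw [chartedSpaceSelf_prod] at this
    exact this.contDiffOn
  -- partial derivative in the second variable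
  set N : E × E → (E →L[ℝ] E) := fun q => (fderiv ℝ M q).comp (ContinuousLinearMap.inr ℝ E E)
    with hN
  have hNc : ContDiffOn ℝ ((⊤ : ℕ∞) : WithTop ℕ∞) N D := by
    apply ContDiffOn.clm_comp _ contDiffOn_const
    exact hMc.fderiv_of_isOpen hDopen (le_refl _)
  have hMdiff : ∀ q ∈ D, DifferentiableAt ℝ M q := by
    intro q hq
    exact ((hMc.contDiffAt (hDopen.mem_nhds hq)).differentiableAt (by simp))
  have hslice : ∀ q ∈ D, HasFDerivAt (fun t => M (q.1, t)) (N q) q.2 := by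
    intro q hq
    have h1 : HasFDerivAt (fun t : E => (q.1, t)) (ContinuousLinearMap.inr ℝ E E) q.2 :=
      hasFDerivAt_prodMk_right q.1 q.2
    exact ((hMdiff q hq).hasFDerivAt.comp q.2 h1 :)
  have hMid : ∀ t ∈ ec.target, M (e0, t) = t := by
    intro t ht
    show ec ((ec.symm e0)⁻¹ * ec.symm t) = t
    rw [hsymm_one, inv_one, one_mul]
    exact (extChartAt 𝓘(ℝ, E) (1 : G)).right_inv ht
  have hNid : N (e0, e0) = ContinuousLinearMap.id ℝ E := by
    have h1 : HasFDerivAt (fun t => M (e0, t)) (N (e0, e0)) e0 := hslice (e0, e0) hDmem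
    have h2 : HasFDerivAt (fun t => M (e0, t)) (ContinuousLinearMap.id ℝ E) e0 := by
      apply (hasFDerivAt_id e0).congr_of_eventuallyEq
      filter_upwards [hecopen.mem_nhds he0mem] with t ht
      exact (hMid t ht)
    exact h1.unique h2
  have hNdet1 : (N (e0, e0)).det = 1 := by
    rw [hNid]; simp [ContinuousLinearMap.det]
  set Dpos : Set (E × E) := D ∩ (fun q => (N q).det) ⁻¹' (Ioi 0) with hDpos
  have hDposopen : IsOpen Dpos := by
    apply ContinuousOn.isOpen_inter_preimage _ hDopen isOpen_Ioi
    exact (my_contDiff_det.comp_contDiffOn hNc).continuousOn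
  have hDposmem : (e0, e0) ∈ Dpos := ⟨hDmem, by simp [hNdet1]⟩
  -- the measure
  set μ : Measure E := (Module.finBasis ℝ E).addHaar with hμ
  -- choice of radii
  obtain ⟨δ, hδpos, hδ⟩ : ∃ δ > 0, closedBall e0 δ ×ˢ closedBall e0 δ ⊆ Dpos := by
    obtain ⟨ε, hεpos, hε⟩ := Metric.isOpen_iff.1 hDposopen (e0, e0) hDposmem
    refine ⟨ε / 2, by linarith, ?_⟩
    intro q hq
    apply hε
    rw [← ball_prod_same]
    exact ⟨(closedBall_subset_ball (by linarith)) hq.1,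
      (closedBall_subset_ball (by linarith)) hq.2⟩
  have hδsubD : ball e0 δ ×ˢ ball e0 δ ⊆ D := fun q hq =>
    (hδ ⟨ball_subset_closedBall hq.1, ball_subset_closedBall hq.2⟩).1
  have hδsubpos : ball e0 δ ×ˢ ball e0 δ ⊆ Dpos := fun q hq =>
    hδ ⟨ball_subset_closedBall hq.1, ball_subset_closedBall hq.2⟩
  have hδtarget : closedBall e0 δ ⊆ ec.target := by
    intro t ht
    exact (hδ (Set.mk_mem_prod ht ht)).1.1.1
  obtain ⟨r3, hr3pos, hr3δ, hr3⟩ :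
      ∃ r3 > 0, r3 ≤ δ / 4 ∧ ball e0 r3 ×ˢ ball e0 r3 ⊆ D ∩ M ⁻¹' ball e0 (δ / 4) := by
    have hopen2 : IsOpen (D ∩ M ⁻¹' ball e0 (δ / 4)) :=
      hMc.continuousOn.isOpen_inter_preimage hDopen isOpen_ball
    have hmem2 : (e0, e0) ∈ D ∩ M ⁻¹' ball e0 (δ / 4) := by
      refine ⟨hDmem, ?_⟩
      show M (e0, e0) ∈ ball e0 (δ / 4)
      rw [hMid e0 he0mem]
      exact mem_ball_self (by linarith)
    obtain ⟨ε, hεpos, hε⟩ := Metric.isOpen_iff.1 hopen2 (e0, e0) hmem2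
    refine ⟨min (ε / 2) (δ / 4), by positivity, min_le_right _ _, ?_⟩
    intro q hq
    apply hε
    rw [← ball_prod_same]
    exact ⟨ball_subset_ball (le_trans (min_le_left _ _) (by linarith)) hq.1,
      ball_subset_ball (le_trans (min_le_left _ _) (by linarith)) hq.2⟩
  -- bump functions
  set χ : ContDiffBump e0 := ⟨δ/4, δ/2, by positivity, by linarith⟩ with hχ
  set ρ : ContDiffBump e0 := ⟨r3/2, r3, by positivity, by linarith⟩ with hρ
  set ρn : E → ℝ := ρ.normed μ with hρn
  set fx : E → ℝ := (closedBall e0 δ).indicator (fun t => x (ec.symm t)) with hfx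
  have hsymmcont : ContinuousOn (fun t : E => x (ec.symm t)) ec.target :=
    hxcont.comp_continuousOn (continuousOn_extChartAt_symm (1 : G))
  have hfxint : Integrable fx μ := by
    rw [hfx, integrable_indicator_iff measurableSet_closedBall]
    exact (hsymmcont.mono hδtarget).integrableOn_compact (isCompact_closedBall _ _)
  set gk : E → E → ℝ := fun p t => χ t * (ρn (M (p, t)) * (N (p, t)).det) with hgk
  have hgkz : ∀ p t, p ∈ ball e0 δ → t ∉ closedBall e0 (δ/2) → gk p t = 0 := by
    intro p t _ ht
    have h1 : (δ : ℝ)/2 ≤ dist t e0 := le_of_lt (by simpa [mem_closedBall, not_le] using ht)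
    have : χ t = 0 := χ.zero_of_le_dist h1
    simp [hgk, this]
  have hgksm : ContDiffOn ℝ ((⊤ : ℕ∞) : WithTop ℕ∞) (Function.uncurry gk)
      (ball e0 δ ×ˢ univ) := by
    intro q hq
    rcases lt_or_ge (dist q.2 e0) δ with h2 | h2
    · have hqD : q ∈ ball e0 δ ×ˢ ball e0 δ := ⟨hq.1, by simpa [mem_ball] using h2⟩
      apply ContDiffAt.contDiffWithinAt
      have hMat : ContDiffAt ℝ ((⊤ : ℕ∞) : WithTop ℕ∞) M q :=
        hMc.contDiffAt (hDopen.mem_nhds (hδsubD hqD))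
      have hNat : ContDiffAt ℝ ((⊤ : ℕ∞) : WithTop ℕ∞) N q :=
        hNc.contDiffAt (hDopen.mem_nhds (hδsubD hqD))
      have c1 : ContDiffAt ℝ ((⊤ : ℕ∞) : WithTop ℕ∞) (fun w : E × E => χ w.2) q :=
        (χ.contDiff.comp contDiff_snd).contDiffAt
      have c2 : ContDiffAt ℝ ((⊤ : ℕ∞) : WithTop ℕ∞) (fun w : E × E => ρn (M w)) q :=
        ρ.contDiff_normed.comp_contDiffAt q hMat
      have c3 : ContDiffAt ℝ ((⊤ : ℕ∞) : WithTop ℕ∞) (fun w : E × E => (N w).det) q :=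
        my_contDiff_det.comp_contDiffAt q hNat
      exact c1.mul (c2.mul c3)
    · have hq2 : (δ : ℝ)/2 < dist q.2 e0 := by linarith
      have hopen : IsOpen {w : E × E | δ/2 < dist w.2 e0} := by
        apply isOpen_lt continuous_const
        exact (continuous_snd.dist continuous_const)
      have hzero : ∀ w : E × E, w ∈ {w : E × E | δ/2 < dist w.2 e0} →
          Function.uncurry gk w = 0 := by
        intro w hw
        have : χ w.2 = 0 := χ.zero_of_le_dist (le_of_lt hw)
        simp [Function.uncurry, hgk, this]
      apply ContDiffWithinAt.congr_of_eventuallyEq (contDiffWithinAt_const (c := 0))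
      · filter_upwards [nhdsWithin_le_nhds (hopen.mem_nhds hq2)] with w hw
        exact hzero w hw
      · exact hzero q hq2
  set Y : E → ℝ := fun p => ∫ t, fx t * gk p t ∂μ with hYdef
  have hYsm : ContDiffOn ℝ ((⊤ : ℕ∞) : WithTop ℕ∞) Y (ball e0 δ) :=
    my_param_integral_smooth μ isOpen_ball (isCompact_closedBall e0 (δ/2)) hgkz
      hfxint.locallyIntegrable hgksm
  -- the smooth correction term Ψ
  have hΦ2 : ContDiffOn ℝ ((⊤ : ℕ∞) : WithTop ℕ∞)
      (fun q : E × E => φ (ec.symm q.1, ec.symm q.2)) (ec.target ×ˢ ec.target) := by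
    have hmap : ContMDiffOn ((modelWithCornersSelf ℝ E).prod (modelWithCornersSelf ℝ E))
        ((modelWithCornersSelf ℝ E).prod (modelWithCornersSelf ℝ E)) (⊤ : ℕ∞)
        (fun q : E × E => ((ec.symm q.1 : G), (ec.symm q.2 : G))) (ec.target ×ˢ ec.target) :=
      hfst.prodMk hsnd
    have := hφ.comp_contMDiffOn hmap
    rw [← modelWithCornersSelf_prod] at this
    rw [chartedSpaceSelf_prod] at this
    exact this.contDiffOn
  set gψ : E → E → ℝ := fun p t => φ (ec.symm p, ec.symm t) * ρn t with hgψ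
  have hρnz : ∀ t : E, t ∉ closedBall e0 r3 → ρn t = 0 := by
    intro t ht
    rw [hρn]
    apply Function.notMem_support.1
    rw [ρ.support_normed_eq]
    intro hmem
    exact ht (ball_subset_closedBall hmem)
  have hgψz : ∀ p t, p ∈ ball e0 δ → t ∉ closedBall e0 r3 → gψ p t = 0 := by
    intro p t _ ht
    simp [hgψ, hρnz t ht]
  have hgψsm : ContDiffOn ℝ ((⊤ : ℕ∞) : WithTop ℕ∞) (Function.uncurry gψ)
      (ball e0 δ ×ˢ univ) := by
    intro q hq
    rcases lt_or_ge (dist q.2 e0) δ with h2 | h2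
    · have hqT : q ∈ ec.target ×ˢ ec.target :=
        ⟨hδtarget (ball_subset_closedBall hq.1),
         hδtarget (ball_subset_closedBall (by simpa [mem_ball] using h2))⟩
      apply ContDiffAt.contDiffWithinAt
      have hopenT : IsOpen (ec.target ×ˢ ec.target) := hecopen.prod hecopen
      have c1 : ContDiffAt ℝ ((⊤ : ℕ∞) : WithTop ℕ∞)
          (fun w : E × E => φ (ec.symm w.1, ec.symm w.2)) q :=
        hΦ2.contDiffAt (hopenT.mem_nhds hqT)
      have c2 : ContDiffAt ℝ ((⊤ : ℕ∞) : WithTop ℕ∞) (fun w : E × E => ρn w.2) q :=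
        (ρ.contDiff_normed.comp contDiff_snd).contDiffAt
      exact c1.mul c2
    · have hq2 : (r3 : ℝ) < dist q.2 e0 := by linarith
      have hopen : IsOpen {w : E × E | r3 < dist w.2 e0} := by
        apply isOpen_lt continuous_const
        exact (continuous_snd.dist continuous_const)
      have hzero : ∀ w : E × E, w ∈ {w : E × E | r3 < dist w.2 e0} →
          Function.uncurry gψ w = 0 := by
        intro w hw
        have : ρn w.2 = 0 := by
          apply hρnz
          simpa [mem_closedBall, not_le] using hw
        simp [Function.uncurry, hgψ, this]
      apply ContDiffWithinAt.congr_of_eventuallyEq (contDiffWithinAt_const (c := 0))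
      · filter_upwards [nhdsWithin_le_nhds (hopen.mem_nhds hq2)] with w hw
        exact hzero w hw
      · exact hzero q hq2
  set Ψ : E → ℝ := fun p => ∫ t, (fun _ : E => (1:ℝ)) t * gψ p t ∂μ with hΨdef
  have hΨsm : ContDiffOn ℝ ((⊤ : ℕ∞) : WithTop ℕ∞) Ψ (ball e0 δ) :=
    my_param_integral_smooth μ isOpen_ball (isCompact_closedBall e0 r3) hgψz
      (locallyIntegrable_const 1) hgψsm
  set c0 : ℝ := ∫ t, x (ec.symm t) * ρn t ∂μ with hc0
  have hρncont : Continuous ρn := (ρ.contDiff_normed (n := (⊤ : ℕ∞))).continuous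
  have hMec : ∀ q ∈ D, M q ∈ ec.target ∧ ec.symm (M q) = A q := by
    intro q hq
    exact ⟨ec.map_source hq.2, ec.left_inv hq.2⟩
  have hballtarget : ball e0 δ ⊆ ec.target := fun t ht => hδtarget (ball_subset_closedBall ht)
  -- the key change-of-variables identity
  have key : ∀ a : G, a ∈ ec.source → ec a ∈ ball e0 r3 → a⁻¹ ∈ ec.source →
      ec a⁻¹ ∈ ball e0 r3 → Y (ec a) = x a + (c0 + Ψ (ec a)) := by
    intro a ha hpa ha' hpa'
    have hsymm_p : ec.symm (ec a) = a := ec.left_inv ha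
    have hsymm_p' : ec.symm (ec a⁻¹) = a⁻¹ := ec.left_inv ha'
    have hpδ : ec a ∈ ball e0 δ := ball_subset_ball (by linarith) hpa
    have hDpt : ∀ t ∈ ball e0 δ, (ec a, t) ∈ D := fun t ht => hδsubD ⟨hpδ, ht⟩
    have hApt : ∀ t, A (ec a, t) = a⁻¹ * ec.symm t := by
      intro t
      simp [hA, hsymm_p]
    have hsymmM : ∀ t ∈ ball e0 δ, ec.symm (M (ec a, t)) = a⁻¹ * ec.symm t := by
      intro t ht
      rw [(hMec _ (hDpt t ht)).2, hApt t]
    -- inverse map facts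
    have hinv1 : ∀ s ∈ ball e0 r3, M (ec a⁻¹, s) ∈ ball e0 (δ/4) ∧ M (ec a, M (ec a⁻¹, s)) = s := by
      intro s hs
      have hD' : (ec a⁻¹, s) ∈ D ∩ M ⁻¹' ball e0 (δ/4) := hr3 ⟨hpa', hs⟩
      have hst : s ∈ ec.target := hballtarget (ball_subset_ball (by linarith) hs)
      have h1 : A (ec a⁻¹, s) = a * ec.symm s := by simp [hA, hsymm_p']
      have h2 : ec.symm (M (ec a⁻¹, s)) = a * ec.symm s := by rw [(hMec _ hD'.1).2, h1]
      refine ⟨hD'.2, ?_⟩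
      have h3 : A (ec a, M (ec a⁻¹, s)) = ec.symm s := by
        simp [hA, hsymm_p, h2, inv_mul_cancel_left]
      show ec (A (ec a, M (ec a⁻¹, s))) = s
      rw [h3]
      exact ec.right_inv hst
    have hinv2 : ∀ t ∈ ball e0 δ, M (ec a, t) ∈ ball e0 r3 → t ∈ ball e0 (δ/4) := by
      intro t ht hmt
      have hD2 : (ec a⁻¹, M (ec a, t)) ∈ D ∩ M ⁻¹' ball e0 (δ/4) := hr3 ⟨hpa', hmt⟩
      have h1 : A (ec a⁻¹, M (ec a, t)) = ec.symm t := by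
        simp [hA, hsymm_p', hsymmM t ht, mul_inv_cancel_left]
      have h2 : M (ec a⁻¹, M (ec a, t)) = t := by
        show ec (A (ec a⁻¹, M (ec a, t))) = t
        rw [h1]
        exact ec.right_inv (hballtarget ht)
      have h4 : M (ec a⁻¹, M (ec a, t)) ∈ ball e0 (δ/4) := hD2.2
      rwa [h2] at h4
    -- step 1 : reduce to an integral over the ball
    have step1 : Y (ec a) = ∫ t in ball e0 δ, fx t * gk (ec a) t ∂μ := by
      rw [hYdef]
      refine (setIntegral_eq_integral_of_forall_compl_eq_zero ?_).symm
      intro t ht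
      have : t ∉ closedBall e0 (δ/2) := by
        intro hc
        exact ht (closedBall_subset_ball (by linarith) hc)
      rw [hgkz (ec a) t hpδ this, mul_zero]
    -- step 2 : pointwise identity with the Jacobian
    have step2 : ∀ t ∈ ball e0 δ, fx t * gk (ec a) t
        = |(N (ec a, t)).det| • ((fun s => x (a * ec.symm s) * ρn s) (M (ec a, t))) := by
      intro t ht
      have hdetpos : 0 < (N (ec a, t)).det := (hδsubpos ⟨hpδ, ht⟩).2
      by_cases hu : M (ec a, t) ∈ ball e0 r3
      · have hχ1 : χ t = 1 :=
          χ.one_of_mem_closedBall (ball_subset_closedBall (hinv2 t ht hu))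
        have hfxt : fx t = x (ec.symm t) := by
          rw [hfx]
          exact indicator_of_mem (ball_subset_closedBall ht) _
        have hxv : x (a * ec.symm (M (ec a, t))) = x (ec.symm t) := by
          rw [hsymmM t ht, mul_inv_cancel_left]
        rw [hgk]
        simp only [smul_eq_mul, hχ1, hfxt, hxv, one_mul, abs_of_pos hdetpos]
        ring
      · have hρ0 : ρn (M (ec a, t)) = 0 := by
          apply Function.notMem_support.1
          rw [hρn, ρ.support_normed_eq]
          exact hu
        rw [hgk]
        simp [hρ0]
    -- step 3 : change of variables
    have hder : ∀ t ∈ ball e0 δ,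
        HasFDerivWithinAt (fun t' => M (ec a, t')) (N (ec a, t)) (ball e0 δ) t :=
      fun t ht => (hslice (ec a, t) (hDpt t ht)).hasFDerivWithinAt
    have hinj : InjOn (fun t' => M (ec a, t')) (ball e0 δ) := by
      intro t1 h1 t2 h2 heq
      have e1 := hsymmM t1 h1
      have e2 := hsymmM t2 h2
      have heq' : M (ec a, t1) = M (ec a, t2) := heq
      have e3 : a⁻¹ * ec.symm t1 = a⁻¹ * ec.symm t2 := by
        rw [← e1, ← e2, heq']
      have e4 : ec.symm t1 = ec.symm t2 := mul_left_cancel e3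
      have e5 := ec.right_inv (hballtarget h1)
      have e6 := ec.right_inv (hballtarget h2)
      rw [← e5, ← e6, e4]
    have step3 := integral_image_eq_integral_abs_det_fderiv_smul μ measurableSet_ball hder hinj
      (fun s => x (a * ec.symm s) * ρn s)
    -- step 4 : the image contains the support
    have step4 : ∫ s in (fun t' => M (ec a, t')) '' ball e0 δ, x (a * ec.symm s) * ρn s ∂μ
        = ∫ s, x (a * ec.symm s) * ρn s ∂μ := by
      apply setIntegral_eq_integral_of_forall_compl_eq_zero
      intro s hs
      by_cases hsupp : s ∈ ball e0 r3
      · exfalso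
        apply hs
        refine ⟨M (ec a⁻¹, s), ?_, (hinv1 s hsupp).2⟩
        exact ball_subset_ball (by linarith) (hinv1 s hsupp).1
      · have : ρn s = 0 := by
          apply Function.notMem_support.1
          rw [hρn, ρ.support_normed_eq]
          exact hsupp
        rw [this, mul_zero]
    -- step 5 : split the integral
    have hρnint : Integrable ρn μ := ρ.integrable_normed
    have hCS : HasCompactSupport ρn := ρ.hasCompactSupport_normed
    have i1 : Integrable (fun s => x (ec.symm s) * ρn s) μ := by
      apply Continuous.integrable_of_hasCompactSupport
      · rw [continuous_iff_continuousAt]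
        intro s
        by_cases hst : s ∈ ec.target
        · exact (hsymmcont.continuousAt (hecopen.mem_nhds hst)).mul hρncont.continuousAt
        · have hsc : s ∉ closedBall e0 r3 := fun hc =>
            hst (hδtarget (closedBall_subset_closedBall (by linarith) hc))
          apply continuousAt_const.congr   -- g := const 0
          filter_upwards [(Metric.isClosed_closedBall (x := e0) (ε := r3)).isOpen_compl.mem_nhds hsc]
            with w hw
          rw [hρnz w hw, mul_zero]
      · apply HasCompactSupport.intro (isCompact_closedBall e0 r3)
        intro w hw
        rw [hρnz w hw, mul_zero]
    have i2 : Integrable (fun s => φ (a, ec.symm s) * ρn s) μ := by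
      apply Continuous.integrable_of_hasCompactSupport
      · rw [continuous_iff_continuousAt]
        intro s
        by_cases hst : s ∈ ec.target
        · have hc2 : ContinuousOn (fun s : E => φ (a, ec.symm s)) ec.target :=
            hφ.continuous.comp_continuousOn
              (continuousOn_const.prodMk (continuousOn_extChartAt_symm (1 : G)))
          exact (hc2.continuousAt (hecopen.mem_nhds hst)).mul hρncont.continuousAt
        · have hsc : s ∉ closedBall e0 r3 := fun hc =>
            hst (hδtarget (closedBall_subset_closedBall (by linarith) hc))
          apply continuousAt_const.congr
          filter_upwards [(Metric.isClosed_closedBall (x := e0) (ε := r3)).isOpen_compl.mem_nhds hsc]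
            with w hw
          rw [hρnz w hw, mul_zero]
      · apply HasCompactSupport.intro (isCompact_closedBall e0 r3)
        intro w hw
        rw [hρnz w hw, mul_zero]
    have i3 : Integrable (fun s => x a * ρn s) μ := hρnint.const_mul (x a)
    have step5 : ∫ s, x (a * ec.symm s) * ρn s ∂μ = x a + (c0 + Ψ (ec a)) := by
      have hsplit : (fun s => x (a * ec.symm s) * ρn s)
          = fun s => x a * ρn s + (x (ec.symm s) * ρn s + φ (a, ec.symm s) * ρn s) := by
        funext s
        rw [hfe a (ec.symm s)]
        ring
      have i12 : Integrable (fun s => x (ec.symm s) * ρn s + φ (a, ec.symm s) * ρn s) μ :=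
        i1.add i2
      rw [hsplit, integral_add i3 i12, integral_add i1 i2, MeasureTheory.integral_const_mul,
        ρ.integral_normed, mul_one]
      have hΨeq : Ψ (ec a) = ∫ s, φ (a, ec.symm s) * ρn s ∂μ := by
        rw [hΨdef]
        simp only [one_mul, hgψ, hsymm_p]
      rw [hΨeq, hc0]
    calc Y (ec a) = ∫ t in ball e0 δ, fx t * gk (ec a) t ∂μ := step1
      _ = ∫ t in ball e0 δ,
            |(N (ec a, t)).det| • ((fun s => x (a * ec.symm s) * ρn s) (M (ec a, t))) ∂μ :=
          setIntegral_congr_fun measurableSet_ball step2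
      _ = ∫ s in (fun t' => M (ec a, t')) '' ball e0 δ, x (a * ec.symm s) * ρn s ∂μ :=
          step3.symm
      _ = ∫ s, x (a * ec.symm s) * ρn s ∂μ := step4
      _ = x a + (c0 + Ψ (ec a)) := step5
  -- assembly
  have hmemb : ∀ᶠ a in 𝓝 (1 : G), a ∈ ec.source ∧ ec a ∈ ball e0 r3 ∧ a⁻¹ ∈ ec.source ∧
      ec a⁻¹ ∈ ball e0 r3 := by
    have hsrc : ec.source ∈ 𝓝 (1 : G) := extChartAt_source_mem_nhds (I := 𝓘(ℝ, E)) (1 : G)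
    have hcec : ContinuousAt ec (1 : G) := continuousAt_extChartAt (I := 𝓘(ℝ, E)) (1 : G)
    have hball1 : ec ⁻¹' ball e0 r3 ∈ 𝓝 (1 : G) :=
      hcec.preimage_mem_nhds (ball_mem_nhds _ hr3pos)
    have hinvc : ContinuousAt (fun a : G => a⁻¹) (1 : G) :=
      (contMDiff_inv (I := 𝓘(ℝ, E)) (n := (⊤ : ℕ∞)) (G := G)).continuous.continuousAt
    have hinv1' : (fun a : G => a⁻¹) ⁻¹' ec.source ∈ 𝓝 (1 : G) := by
      apply hinvc.preimage_mem_nhds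
      simpa using hsrc
    have hinv2' : (fun a : G => a⁻¹) ⁻¹' (ec ⁻¹' ball e0 r3) ∈ 𝓝 (1 : G) := by
      apply hinvc.preimage_mem_nhds
      simpa using hball1
    filter_upwards [hsrc, hball1, hinv1', hinv2'] with a h1 h2 h3 h4
    exact ⟨h1, h2, h3, h4⟩
  have hxev : x =ᶠ[𝓝 (1 : G)] fun a => Y (ec a) - c0 - Ψ (ec a) := by
    filter_upwards [hmemb] with a ha
    obtain ⟨h1, h2, h3, h4⟩ := ha
    have := key a h1 h2 h3 h4
    show x a = Y (ec a) - c0 - Ψ (ec a)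
    linarith
  have he0ball : e0 ∈ ball e0 δ := mem_ball_self hδpos
  have hYat : ContMDiffAt 𝓘(ℝ, E) 𝓘(ℝ, ℝ) (⊤ : ℕ∞) Y e0 :=
    (hYsm.contDiffAt (isOpen_ball.mem_nhds he0ball)).contMDiffAt
  have hΨat : ContMDiffAt 𝓘(ℝ, E) 𝓘(ℝ, ℝ) (⊤ : ℕ∞) Ψ e0 :=
    (hΨsm.contDiffAt (isOpen_ball.mem_nhds he0ball)).contMDiffAt
  have hecat : ContMDiffAt 𝓘(ℝ, E) 𝓘(ℝ, E) (⊤ : ℕ∞) ec (1 : G) :=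
    contMDiffAt_extChartAt (I := 𝓘(ℝ, E))
  have htotal : ContMDiffAt 𝓘(ℝ, E) 𝓘(ℝ, ℝ) (⊤ : ℕ∞) (fun a => Y (ec a) - c0 - Ψ (ec a)) 1 := by
    have h1 : ContMDiffAt 𝓘(ℝ, E) 𝓘(ℝ, ℝ) (⊤ : ℕ∞) (fun a : G => Y (ec a)) 1 :=
      hYat.comp 1 hecat
    have h2 : ContMDiffAt 𝓘(ℝ, E) 𝓘(ℝ, ℝ) (⊤ : ℕ∞) (fun a : G => Ψ (ec a)) 1 :=
      hΨat.comp 1 hecat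
    exact (h1.sub contMDiffAt_const).sub h2
  exact htotal.congr_of_eventuallyEq hxev

/-- if two smooth exponents of a finite-dimensional real Lie group are
equivalent via a continuous function `x` with `x e = 0`, then `x` is smooth. -/
theorem equivalence_function_of_smooth_exponents_is_smooth
    {E : Type*} [NormedAddCommGroup E] [NormedSpace ℝ E] [FiniteDimensional ℝ E]
    {G : Type*} [TopologicalSpace G] [ChartedSpace E G] [Group G]
    [LieGroup (modelWithCornersSelf ℝ E) (⊤ : ℕ∞) G]
    (ξ ξ' : G × G → ℝ)
    (hξsmooth : ContMDiff ((modelWithCornersSelf ℝ E).prod (modelWithCornersSelf ℝ E))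
      (modelWithCornersSelf ℝ ℝ) (⊤ : ℕ∞) ξ)
    (hξ'smooth : ContMDiff ((modelWithCornersSelf ℝ E).prod (modelWithCornersSelf ℝ E))
      (modelWithCornersSelf ℝ ℝ) (⊤ : ℕ∞) ξ')
    (hξe : ξ (1, 1) = 0) (hξ'e : ξ' (1, 1) = 0)
    (hξcoc : ∀ a b c : G, ξ (a, b) + ξ (a * b, c) = ξ (b, c) + ξ (a, b * c))
    (hξ'coc : ∀ a b c : G, ξ' (a, b) + ξ' (a * b, c) = ξ' (b, c) + ξ' (a, b * c))
    (x : G → ℝ) (hxcont : Continuous x) (hxe : x 1 = 0)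
    (hrel : ∀ a b : G, ξ' (a, b) = ξ (a, b) + x a + x b - x (a * b)) :
    ContMDiff (modelWithCornersSelf ℝ E) (modelWithCornersSelf ℝ ℝ) (⊤ : ℕ∞) x := by
  set φ : G × G → ℝ := fun q => ξ q - ξ' q with hφdef
  have hφ : ContMDiff ((modelWithCornersSelf ℝ E).prod (modelWithCornersSelf ℝ E))
      (modelWithCornersSelf ℝ ℝ) (⊤ : ℕ∞) φ := hξsmooth.sub hξ'smooth
  have hfe : ∀ a b : G, x (a * b) = x a + x b + φ (a, b) := by
    intro a b
    have := hrel a b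
    simp only [hφdef]
    linarith
  have h1 : ContMDiffAt (modelWithCornersSelf ℝ E) (modelWithCornersSelf ℝ ℝ) (⊤ : ℕ∞) x 1 :=
    my_smooth_at_one φ hφ x hxcont hfe
  intro g
  have hxg : x = fun y => x g + (x (g⁻¹ * y) + φ (g, g⁻¹ * y)) := by
    funext y
    have := hfe g (g⁻¹ * y)
    rw [mul_inv_cancel_left] at this
    linarith
  rw [hxg]
  apply ContMDiffAt.add contMDiffAt_const
  have h2 : ContMDiffAt (modelWithCornersSelf ℝ E) (modelWithCornersSelf ℝ E) (⊤ : ℕ∞)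
      (fun y : G => g⁻¹ * y) g := contMDiff_mul_left.contMDiffAt
  apply ContMDiffAt.add
  · have h1' : ContMDiffAt (modelWithCornersSelf ℝ E) (modelWithCornersSelf ℝ ℝ) (⊤ : ℕ∞)
        x (g⁻¹ * g) := by
      rw [inv_mul_cancel]
      exact h1
    exact h1'.comp g h2
  · exact (hφ.contMDiffAt).comp g (contMDiffAt_const.prodMk h2)
end
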